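/- arXiv:1302.4192 — 4 statements merged into one kernel-verified Lean document; each statement's English description precedes it below -/
import Mathlib

section
/- If X is a T1 regular topological space with a σ-hereditarily closure-preserving strong π-base, then X has a σ-locally finite strong π-base. -/
open Set Topology

/-- A π-base: a collection of nonempty open sets such that every nonempty open
set contains a member. -/
def IsPiBase (X : Type*) [TopologicalSpace X] (pb : Set (Set X)) : Prop :=
  (∀ P ∈ pb, IsOpen P ∧ P.Nonempty) ∧
  ∀ O : Set X, IsOpen O → O.Nonempty → ∃ P ∈ pb, P ⊆ O

/-- A discrete family of sets: every point has a neighborhood meeting at most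
one member of the family. -/
def IsDiscreteFam (X : Type*) [TopologicalSpace X] (pb : Set (Set X)) : Prop :=
  ∀ x : X, ∃ U ∈ nhds x, {P ∈ pb | (P ∩ U).Nonempty}.Subsingleton

/-- A locally finite family of sets. -/
def IsLocFinFam (X : Type*) [TopologicalSpace X] (pb : Set (Set X)) : Prop :=
  ∀ x : X, ∃ U ∈ nhds x, {P ∈ pb | (P ∩ U).Nonempty}.Finite

/-- Hereditarily closure-preserving: whenever S(P) ⊆ P is chosen for each P in
the family, the family {S(P)} is closure-preserving. -/
def IsHCP (X : Type*) [TopologicalSpace X] (pb : Set (Set X)) : Prop :=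
  ∀ S : Set X → Set X, (∀ P, S P ⊆ P) →
    ∀ qb ⊆ pb, closure (⋃ P ∈ qb, S P) = ⋃ P ∈ qb, closure (S P)

/-- π-metrizable: has a σ-discrete π-base. -/
def PiMetrizable (X : Type*) [TopologicalSpace X] : Prop :=
  ∃ pb : ℕ → Set (Set X), IsPiBase X (⋃ n, pb n) ∧ ∀ n, IsDiscreteFam X (pb n)

/-- Quasi-open map: images of nonempty open sets have nonempty interior. -/
def QuasiOpenMap {X Y : Type*} [TopologicalSpace X] [TopologicalSpace Y]
    (f : X → Y) : Prop :=
  ∀ U : Set X, IsOpen U → U.Nonempty → (interior (f '' U)).Nonempty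

/-- A strong π-base at a point x: a family of nonempty open sets which is a
π-base at x and such that every open neighborhood of x contains all but
finitely many members of the family. -/
def StrongPiBaseAt {X : Type*} [TopologicalSpace X] (pb : Set (Set X)) (x : X) : Prop :=
  (∀ P ∈ pb, IsOpen P ∧ P.Nonempty) ∧
  (∀ U : Set X, IsOpen U → x ∈ U → ∃ P ∈ pb, P ⊆ U) ∧
  (∀ U : Set X, IsOpen U → x ∈ U → {P ∈ pb | ¬ P ⊆ U}.Finite)

/-- Strongly π-metrizable: has a σ-discrete strong π-base. -/
def StronglyPiMetrizable (X : Type*) [TopologicalSpace X] : Prop :=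
  ∃ pb : X → Set (Set X), (∀ x, StrongPiBaseAt (pb x) x) ∧
    ∃ Q : ℕ → Set (Set X), (⋃ x, pb x) = ⋃ n, Q n ∧ ∀ n, IsDiscreteFam X (Q n)

section AuxGreedy

variable {α : Type*}

/-- Finite sets of already-chosen elements, for a greedy injective selection. -/
private noncomputable def auxSt (C : ℕ → Set α) (hC : ∀ k, (C k).Infinite) :
    ℕ → {s : Set α // s.Finite}
  | 0 => ⟨∅, Set.finite_empty⟩
  | (k + 1) =>
    ⟨insert (((hC k).diff (auxSt C hC k).2).nonempty.some) (auxSt C hC k).1,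
      (auxSt C hC k).2.insert _⟩

private noncomputable def auxA (C : ℕ → Set α) (hC : ∀ k, (C k).Infinite) (k : ℕ) : α :=
  ((hC k).diff (auxSt C hC k).2).nonempty.some

private lemma auxA_spec (C : ℕ → Set α) (hC : ∀ k, (C k).Infinite) (k : ℕ) :
    auxA C hC k ∈ C k \ (auxSt C hC k).1 :=
  Set.Nonempty.some_mem _

private lemma auxA_mem_st (C : ℕ → Set α) (hC : ∀ k, (C k).Infinite) :
    ∀ {j k : ℕ}, j < k → auxA C hC j ∈ (auxSt C hC k).1 := by
  intro j k hjk
  induction k with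
  | zero => exact absurd hjk (Nat.not_lt_zero j)
  | succ k ih =>
    have hst : (auxSt C hC (k + 1)).1 = insert (auxA C hC k) (auxSt C hC k).1 := rfl
    rw [hst]
    rcases Nat.lt_succ_iff_lt_or_eq.1 hjk with h | h
    · exact Set.mem_insert_of_mem _ (ih h)
    · subst h; exact Set.mem_insert _ _

private lemma exists_seq_injective_mem (C : ℕ → Set α) (hC : ∀ k, (C k).Infinite) :
    ∃ A : ℕ → α, (∀ k, A k ∈ C k) ∧ Function.Injective A := by
  refine ⟨auxA C hC, fun k => (auxA_spec C hC k).1, fun j k hjk => ?_⟩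
  rcases lt_trichotomy j k with hlt | heq | hgt
  · exfalso
    apply (auxA_spec C hC k).2
    rw [← hjk]
    exact auxA_mem_st C hC hlt
  · exact heq
  · exfalso
    apply (auxA_spec C hC j).2
    rw [hjk]
    exact auxA_mem_st C hC hgt

end AuxGreedy

theorem stmt16 {X : Type*} [TopologicalSpace X] [T1Space X] [RegularSpace X]
    (pb : X → Set (Set X)) (h : ∀ x, StrongPiBaseAt (pb x) x)
    (Q : ℕ → Set (Set X)) (hQ : (⋃ x, pb x) = ⋃ n, Q n)
    (hHCP : ∀ n, IsHCP X (Q n)) :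
    ∃ pb' : X → Set (Set X), (∀ x, StrongPiBaseAt (pb' x) x) ∧
      ∃ Q' : ℕ → Set (Set X), (⋃ x, pb' x) = ⋃ n, Q' n ∧
        ∀ n, IsLocFinFam X (Q' n) := by
  classical
  -- members of classes are open and nonempty
  have Pmem : ∀ {n : ℕ} {P : Set X}, P ∈ Q n → IsOpen P ∧ P.Nonempty := by
    intro n P hP
    have h1 : P ∈ ⋃ m, Q m := Set.mem_iUnion.2 ⟨n, hP⟩
    rw [← hQ] at h1
    obtain ⟨x, hx⟩ := Set.mem_iUnion.1 h1
    exact (h x).1 P hx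
  -- trouble sets: points where Q n is not locally finite
  set T : ℕ → Set X := fun n => {z | ∀ U ∈ nhds z, {P ∈ Q n | (P ∩ U).Nonempty}.Infinite}
    with hTdef
  -- at a trouble point, infinitely many members of the class adhere
  have hTmem : ∀ {n : ℕ} {z : X}, z ∈ T n → {P ∈ Q n | z ∈ closure P}.Infinite := by
    intro n z hz
    have hz' : ∀ U ∈ nhds z, {P ∈ Q n | (P ∩ U).Nonempty}.Infinite := hz
    set qb : Set (Set X) := {P ∈ Q n | z ∉ closure P} with hqbdef
    have heq := hHCP n id (fun P => subset_rfl) qb (Set.sep_subset _ _)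
    have hz1 : z ∉ closure (⋃ P ∈ qb, id P) := by
      rw [heq]
      intro hmem
      obtain ⟨P, hPq, hcl⟩ := Set.mem_iUnion₂.1 hmem
      exact hPq.2 hcl
    have hU : (closure (⋃ P ∈ qb, id P))ᶜ ∈ nhds z :=
      (isClosed_closure.isOpen_compl).mem_nhds hz1
    refine (hz' _ hU).mono ?_
    rintro P ⟨hPQ, u, huP, huU⟩
    refine ⟨hPQ, ?_⟩
    by_contra hncl
    exact huU (subset_closure (Set.mem_biUnion (⟨hPQ, hncl⟩ : P ∈ qb) huP))
  -- Sub-lemma B: no convergent sequence of points adhering to infinitely many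
  -- distinct members of a single class
  have subB : ∀ (c : ℕ) (z : X) (w : ℕ → X) (A : ℕ → Set X),
      (∀ U ∈ nhds z, {k | w k ∉ U}.Finite) → (∀ k, w k ≠ z) →
      (∀ k, A k ∈ Q c) → (∀ k, w k ∈ closure (A k)) →
      (Set.range A).Infinite → False := by
    intro c z w A hconv hne hAQ hAcl hinf
    have hsep : ∀ k : ℕ, ∃ W : Set X, IsOpen W ∧ w k ∈ W ∧ z ∉ closure W := by
      intro k
      have h1 : ({z}ᶜ : Set X) ∈ nhds (w k) :=
        isOpen_compl_singleton.mem_nhds (by simp [hne k])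
      obtain ⟨t, ht, htc, hts⟩ := exists_mem_nhds_isClosed_subset h1
      refine ⟨interior t, isOpen_interior, mem_interior_iff_mem_nhds.2 ht, fun hzc => ?_⟩
      exact hts ((closure_minimal interior_subset htc) hzc) rfl
    choose W hWo hWm hWc using hsep
    set i : Set X → ℕ := fun P => sInf {k | A k = P} with hidef
    have hiA : ∀ P ∈ Set.range A, A (i P) = P := by
      rintro P ⟨k, rfl⟩
      exact Nat.sInf_mem (⟨k, rfl⟩ : {j | A j = A k}.Nonempty)
    set S : Set X → Set X := fun P => if P ∈ Set.range A then P ∩ W (i P) else ∅ with hSdef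
    have hS : ∀ P, S P ⊆ P := by
      intro P
      by_cases hP : P ∈ Set.range A
      · simp only [hSdef, if_pos hP]
        exact Set.inter_subset_left
      · simp only [hSdef, if_neg hP]
        exact Set.empty_subset _
    have heq := hHCP c S hS (Set.range A) (by rintro P ⟨k, rfl⟩; exact hAQ k)
    have hzR : z ∈ ⋃ P ∈ Set.range A, closure (S P) → False := by
      intro hmem
      obtain ⟨P, hP, hcl⟩ := Set.mem_iUnion₂.1 hmem
      rw [show S P = P ∩ W (i P) from by simp only [hSdef, if_pos hP]] at hcl
      exact hWc (i P) (closure_mono Set.inter_subset_right hcl)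
    apply hzR
    rw [← heq, mem_closure_iff]
    intro o ho hzo
    have him : (i '' Set.range A).Infinite := by
      refine hinf.image ?_
      intro P hP P' hP' hii
      rw [← hiA P hP, ← hiA P' hP', hii]
    obtain ⟨k0, hk0⟩ := (him.diff (hconv o (ho.mem_nhds hzo))).nonempty
    obtain ⟨⟨P, hPr, rfl⟩, hk0o⟩ := hk0
    have hwk : w (i P) ∈ o := by
      by_contra hcon
      exact hk0o hcon
    have hwcl : w (i P) ∈ closure P := by
      have h2 := hAcl (i P)
      rwa [hiA P hPr] at h2
    rw [mem_closure_iff] at hwcl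
    obtain ⟨x, hx1, hx2⟩ := hwcl (o ∩ W (i P)) (ho.inter (hWo _)) ⟨hwk, hWm _⟩
    refine ⟨x, hx1.1, ?_⟩
    refine Set.mem_biUnion hPr ?_
    rw [show S P = P ∩ W (i P) from by simp only [hSdef, if_pos hPr]]
    exact ⟨hx2, hx1.2⟩
  -- non-isolated points have infinite strong π-bases
  have pbInf : ∀ w : X, ¬ IsOpen ({w} : Set X) → (pb w).Infinite := by
    intro w hw
    by_contra hni
    rw [Set.not_infinite] at hni
    have hex : ∃ P ∈ pb w, ∀ U : Set X, IsOpen U → w ∈ U → P ⊆ U := by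
      by_contra hno
      push_neg at hno
      choose! U hU1 hU2 hU3 using hno
      have hU0o : IsOpen (⋂ P ∈ pb w, U P) := hni.isOpen_biInter hU1
      have hU0m : w ∈ ⋂ P ∈ pb w, U P := Set.mem_biInter hU2
      obtain ⟨P, hP, hPs⟩ := (h w).2.1 _ hU0o hU0m
      exact hU3 P hP (hPs.trans (Set.biInter_subset_of_mem hP))
    obtain ⟨P, hP, hmin⟩ := hex
    have hPne := ((h w).1 P hP).2
    have hPsub : P ⊆ {w} := by
      intro u hu
      by_contra hune
      have hune' : u ≠ w := by simpa using hune
      have huw : w ∈ ({u}ᶜ : Set X) := by simp [hune'.symm]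
      exact (hmin {u}ᶜ isOpen_compl_singleton huw hu) rfl
    have hPeq : P = {w} := by
      rcases Set.subset_singleton_iff_eq.1 hPsub with h0 | h0
      · exact absurd h0 hPne.ne_empty
      · exact h0
    exact hw (hPeq ▸ ((h w).1 P hP).1)
  -- isolated points have their singleton in their strong π-base
  have singMem : ∀ w : X, IsOpen ({w} : Set X) → ({w} : Set X) ∈ pb w := by
    intro w hw
    obtain ⟨P, hP, hPs⟩ := (h w).2.1 {w} hw (Set.mem_singleton w)
    have hPeq : P = {w} := by
      rcases Set.subset_singleton_iff_eq.1 hPs with h0 | h0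
      · exact absurd h0 ((h w).1 P hP).2.ne_empty
      · exact h0
    rwa [hPeq] at hP
  -- a countable injective selection from the strong π-base at a non-isolated point
  have bseq : ∀ w : X, ¬ IsOpen ({w} : Set X) →
      ∃ b : ℕ → Set X, (∀ r, b r ∈ pb w) ∧ Function.Injective b := by
    intro w hw
    have hinf := pbInf w hw
    refine ⟨fun r => ((hinf.natEmbedding _) r : Set X), fun r => ((hinf.natEmbedding _) r).2, ?_⟩
    intro r r' hrr
    exact (hinf.natEmbedding _).injective (Subtype.ext hrr)
  -- all but finitely many members of such a sequence lie in any neighborhood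
  have bevt : ∀ (w : X) (b : ℕ → Set X), (∀ r, b r ∈ pb w) → Function.Injective b →
      ∀ U : Set X, IsOpen U → w ∈ U → {r | ¬ b r ⊆ U}.Finite := by
    intro w b hbm hbi U hU hwU
    have hfin := (h w).2.2 U hU hwU
    have hpre : {r | ¬ b r ⊆ U} = b ⁻¹' {P ∈ pb w | ¬ P ⊆ U} := by
      ext r
      simp [hbm r]
    rw [hpre]
    exact hfin.preimage hbi.injOn
  -- and all but finitely many of their closures lie in any neighborhood
  have bevtc : ∀ (w : X) (b : ℕ → Set X), (∀ r, b r ∈ pb w) → Function.Injective b →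
      ∀ U ∈ nhds w, {r | ¬ closure (b r) ⊆ U}.Finite := by
    intro w b hbm hbi U hU
    obtain ⟨t, ht, htc, hts⟩ := exists_mem_nhds_isClosed_subset hU
    have h2 := bevt w b hbm hbi (interior t) isOpen_interior (mem_interior_iff_mem_nhds.2 ht)
    refine h2.subset ?_
    intro r hr
    intro hsub
    exact hr (((closure_mono hsub).trans (closure_minimal interior_subset htc)).trans hts)
  -- KEY LEMMA: inside an open set without isolated points, every class admits a
  -- "good" open subset whose closure avoids the trouble set of that class
  have goodShrink : ∀ (n : ℕ) (B : Set X), IsOpen B → B.Nonempty →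
      (∀ w ∈ B, ¬ IsOpen ({w} : Set X)) →
      ∃ A : Set X, IsOpen A ∧ A.Nonempty ∧ A ⊆ B ∧ ∀ t ∈ closure A, t ∉ T n := by
    intro n B hBo hBne hBI
    by_contra hbad
    push_neg at hbad
    -- Step 1: every point of B is a trouble point of class n
    have hBT : ∀ w ∈ B, w ∈ T n := by
      intro w hwB
      haveI : Nonempty X := ⟨w⟩
      obtain ⟨b, hbm, hbi⟩ := bseq w (hBI w hwB)
      have hτex : ∀ r : ℕ, b r ⊆ B → ∃ t, t ∈ closure (b r) ∧ t ∈ T n := by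
        intro r hr
        obtain ⟨t, ht1, ht2⟩ := hbad (b r) ((h w).1 _ (hbm r)).1 ((h w).1 _ (hbm r)).2 hr
        exact ⟨t, ht1, ht2⟩
      have hGfin : {r | ¬ b r ⊆ B}.Finite := bevt w b hbm hbi B hBo hwB
      have hGinf : {r | b r ⊆ B}.Infinite := by
        have h2 := hGfin.infinite_compl
        have h3 : {r | ¬ b r ⊆ B}ᶜ = {r | b r ⊆ B} := by
          ext r; simp
        rwa [h3] at h2
      choose! τ hτ1 hτ2 using hτex
      by_cases hV : (τ '' {r | b r ⊆ B}).Finite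
      · -- the witnesses take finitely many values: pigeonhole, the repeated value is w
        have hfib : ∃ v ∈ τ '' {r | b r ⊆ B}, {r | (b r ⊆ B) ∧ τ r = v}.Infinite := by
          by_contra hall
          push_neg at hall
          have hcov : {r | b r ⊆ B} ⊆ ⋃ v ∈ τ '' {r | b r ⊆ B}, {r | (b r ⊆ B) ∧ τ r = v} := by
            intro r hr
            exact Set.mem_biUnion (Set.mem_image_of_mem τ hr) ⟨hr, rfl⟩
          have hfin2 : (⋃ v ∈ τ '' {r | b r ⊆ B}, {r | (b r ⊆ B) ∧ τ r = v}).Finite :=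
            hV.biUnion (fun v hv => hall v hv)
          exact hGinf (hfin2.subset hcov)
        obtain ⟨v, hvim, hfibv⟩ := hfib
        have hvw : v = w := by
          by_contra hvne
          have hUm : ({v}ᶜ : Set X) ∈ nhds w := by
            refine isOpen_compl_singleton.mem_nhds ?_
            simp [Ne.symm hvne]
          have hclevt := bevtc w b hbm hbi _ hUm
          obtain ⟨r, hr⟩ := (hfibv.diff hclevt).nonempty
          obtain ⟨⟨hrG, hrτ⟩, hrn⟩ := hr
          have hsub : closure (b r) ⊆ ({v}ᶜ : Set X) := not_not.1 hrn
          have : v ∈ ({v}ᶜ : Set X) := hsub (hrτ ▸ hτ1 r hrG)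
          simp at this
        obtain ⟨r, hrG, hrτ⟩ := hfibv.nonempty
        have h2 := hτ2 r hrG
        rw [hrτ, hvw] at h2
        exact h2
      · -- infinitely many distinct witnesses converging to w: contradiction via subB
        exfalso
        have hVinf : (τ '' {r | b r ⊆ B}).Infinite := hV
        have hVinf' : ((τ '' {r | b r ⊆ B}) \ {w}).Infinite :=
          hVinf.diff (Set.finite_singleton w)
        set e := hVinf'.natEmbedding _ with hedef
        have hrex : ∀ k : ℕ, ∃ r, (b r ⊆ B) ∧ τ r = (e k : X) := by
          intro k
          obtain ⟨⟨r, hr1, hr2⟩, -⟩ := (e k).2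
          exact ⟨r, hr1, hr2⟩
        choose rr hrr1 hrr2 using hrex
        have hrinj : Function.Injective rr := by
          intro k k' hkk
          have hvals : (e k : X) = (e k' : X) := by
            rw [← hrr2 k, ← hrr2 k', hkk]
          exact e.injective (Subtype.ext hvals)
        set wseq : ℕ → X := fun k => (e k : X) with hwdef
        have hwne : ∀ k, wseq k ≠ w := by
          intro k
          have hk := (e k).2.2
          simpa using hk
        have hwT : ∀ k, wseq k ∈ T n := by
          intro k
          have h2 := hτ2 (rr k) (hrr1 k)
          rwa [hrr2 k] at h2
        have hwcl : ∀ k, wseq k ∈ closure (b (rr k)) := by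
          intro k
          have h2 := hτ1 (rr k) (hrr1 k)
          rwa [hrr2 k] at h2
        have hwconv : ∀ U ∈ nhds w, {k | wseq k ∉ U}.Finite := by
          intro U hU
          have hfin := bevtc w b hbm hbi U hU
          have hsub : {k | wseq k ∉ U} ⊆ rr ⁻¹' {r | ¬ closure (b r) ⊆ U} := by
            intro k hk
            intro hsub2
            exact hk (hsub2 (hwcl k))
          exact (hfin.preimage hrinj.injOn).subset hsub
        have hCinf : ∀ k, {P ∈ Q n | wseq k ∈ closure P}.Infinite := fun k => hTmem (hwT k)
        obtain ⟨A, hAmem, hAinj⟩ := exists_seq_injective_mem _ hCinf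
        exact subB n w wseq A hwconv hwne (fun k => (hAmem k).1) (fun k => (hAmem k).2)
          (Set.infinite_range_of_injective hAinj)
    -- Step 2: B ⊆ T n is itself impossible, again via subB
    obtain ⟨w, hwB⟩ := hBne
    obtain ⟨b, hbm, hbi⟩ := bseq w (hBI w hwB)
    have hGfin : {r | ¬ b r ⊆ B}.Finite := bevt w b hbm hbi B hBo hwB
    have hGinf : {r | b r ⊆ B}.Infinite := by
      have h2 := hGfin.infinite_compl
      have h3 : {r | ¬ b r ⊆ B}ᶜ = {r | b r ⊆ B} := by
        ext r; simp
      rwa [h3] at h2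
    set e := hGinf.natEmbedding _ with hedef
    have hpex : ∀ k : ℕ, ∃ p, p ∈ b (e k) ∧ p ≠ w := by
      intro k
      have hne := ((h w).1 _ (hbm (e k))).2
      by_contra hno
      push_neg at hno
      have hsub : b (e k : ℕ) ⊆ {w} := fun p hp => hno p hp
      have heq2 : b (e k : ℕ) = {w} := by
        rcases Set.subset_singleton_iff_eq.1 hsub with h0 | h0
        · exact absurd h0 hne.ne_empty
        · exact h0
      exact hBI w hwB (heq2 ▸ ((h w).1 _ (hbm (e k))).1)
    choose p hp1 hp2 using hpex
    have hpB : ∀ k, p k ∈ B := fun k => (e k).2 (hp1 k)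
    have hpT : ∀ k, p k ∈ T n := fun k => hBT _ (hpB k)
    have heinj : Function.Injective (fun k => ((e k : ℕ))) := by
      intro k k' hkk
      exact e.injective (Subtype.ext hkk)
    have hpconv : ∀ U ∈ nhds w, {k | p k ∉ U}.Finite := by
      intro U hU
      obtain ⟨t, ht, htc, hts⟩ := exists_mem_nhds_isClosed_subset hU
      have hfin := bevt w b hbm hbi (interior t) isOpen_interior (mem_interior_iff_mem_nhds.2 ht)
      have hsub : {k | p k ∉ U} ⊆ (fun k => ((e k : ℕ))) ⁻¹' {r | ¬ b r ⊆ interior t} := by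
        intro k hk
        intro hsub2
        exact hk (hts (interior_subset (hsub2 (hp1 k))))
      exact (hfin.preimage heinj.injOn).subset hsub
    have hCinf : ∀ k, {P ∈ Q n | p k ∈ closure P}.Infinite := fun k => hTmem (hpT k)
    obtain ⟨A, hAmem, hAinj⟩ := exists_seq_injective_mem _ hCinf
    exact subB n w p A hpconv hp2 (fun k => (hAmem k).1) (fun k => (hAmem k).2)
      (Set.infinite_range_of_injective hAinj)
  -- global choice of good shrinks
  have shrEx : ∀ (n : ℕ) (B : Set X),
      ∃ A : Set X, (IsOpen B ∧ B.Nonempty ∧ ∀ w ∈ B, ¬ IsOpen ({w} : Set X)) →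
        (IsOpen A ∧ A.Nonempty ∧ A ⊆ B ∧ ∀ t ∈ closure A, t ∉ T n) := by
    intro n B
    by_cases hq : IsOpen B ∧ B.Nonempty ∧ ∀ w ∈ B, ¬ IsOpen ({w} : Set X)
    · obtain ⟨A, hA⟩ := goodShrink n B hq.1 hq.2.1 hq.2.2
      exact ⟨A, fun _ => hA⟩
    · exact ⟨∅, fun hq' => absurd hq' hq⟩
  choose shr hshr using shrEx
  -- a class for each member of the original σ-HCP family
  have classEx : ∀ B : Set X, B ∈ (⋃ x, pb x) → ∃ m, B ∈ Q m := by
    intro B hB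
    exact Set.mem_iUnion.1 (hQ ▸ hB)
  set nB : Set X → ℕ := fun B => if h2 : ∃ m, B ∈ Q m then h2.choose else 0 with hnBdef
  have hnB : ∀ B : Set X, (∃ m, B ∈ Q m) → B ∈ Q (nB B) := by
    intro B h2
    simp only [hnBdef, dif_pos h2]
    exact h2.choose_spec
  -- the replacement of a member: a singleton of an isolated point if possible,
  -- otherwise a good shrink
  set Ash : Set X → Set X := fun B =>
    if h1 : ∃ w ∈ B, IsOpen ({w} : Set X) then {h1.choose} else shr (nB B) B with hAshdef
  set pb' : X → Set (Set X) := fun y =>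
    if IsOpen ({y} : Set X) then {{y}} else Ash '' (pb y) with hpb'def
  set SS : ℕ → Set (Set X) := fun m =>
    {A | ∃ x : X, IsOpen ({x} : Set X) ∧ ({x} : Set X) ∈ Q m ∧ A = {x}} with hSSdef
  set DD : ℕ → Set (Set X) := fun n =>
    {A | ∃ B : Set X, B ∈ Q n ∧ IsOpen B ∧ B.Nonempty ∧
      (∀ w ∈ B, ¬ IsOpen ({w} : Set X)) ∧ A = shr n B} with hDDdef
  set Q' : ℕ → Set (Set X) := fun k =>
    (if k % 2 = 0 then SS (k / 2) else DD (k / 2)) ∩ (⋃ x, pb' x) with hQ'def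
  have hQ'eq : ∀ k, Q' k = (if k % 2 = 0 then SS (k / 2) else DD (k / 2)) ∩ (⋃ x, pb' x) :=
    fun k => by rw [hQ'def]
  -- basic facts about Ash
  have hAshB : ∀ (y : X) (B : Set X), B ∈ pb y →
      IsOpen (Ash B) ∧ (Ash B).Nonempty ∧ Ash B ⊆ B := by
    intro y B hB
    have hBo := ((h y).1 B hB).1
    have hBne := ((h y).1 B hB).2
    by_cases h1 : ∃ w ∈ B, IsOpen ({w} : Set X)
    · have hc := h1.choose_spec
      have he : Ash B = {h1.choose} := by
        simp only [hAshdef]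
        rw [dif_pos h1]
      rw [he]
      exact ⟨hc.2, Set.singleton_nonempty _, Set.singleton_subset_iff.2 hc.1⟩
    · have he : Ash B = shr (nB B) B := by
        simp only [hAshdef]
        rw [dif_neg h1]
      push_neg at h1
      have hq := hshr (nB B) B ⟨hBo, hBne, h1⟩
      rw [he]
      exact ⟨hq.1, hq.2.1, hq.2.2.1⟩
  -- the new family is a strong π-base at each point
  have hpb'strong : ∀ y, StrongPiBaseAt (pb' y) y := by
    intro y
    by_cases hy : IsOpen ({y} : Set X)
    · have he : pb' y = {{y}} := by simp only [hpb'def, if_pos hy]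
      rw [he]
      refine ⟨?_, ?_, ?_⟩
      · intro P hP
        rw [Set.mem_singleton_iff] at hP
        subst hP
        exact ⟨hy, Set.singleton_nonempty _⟩
      · intro U hU hyU
        exact ⟨{y}, rfl, Set.singleton_subset_iff.2 hyU⟩
      · intro U hU hyU
        exact (Set.finite_singleton _).subset (Set.sep_subset _ _)
    · have he : pb' y = Ash '' (pb y) := by simp only [hpb'def, if_neg hy]
      rw [he]
      refine ⟨?_, ?_, ?_⟩
      · rintro P ⟨B, hB, rfl⟩
        exact ⟨(hAshB y B hB).1, (hAshB y B hB).2.1⟩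
      · intro U hU hyU
        obtain ⟨B, hB, hBU⟩ := (h y).2.1 U hU hyU
        exact ⟨Ash B, ⟨B, hB, rfl⟩, (hAshB y B hB).2.2.trans hBU⟩
      · intro U hU hyU
        have hfin := ((h y).2.2 U hU hyU).image Ash
        refine hfin.subset ?_
        rintro P ⟨⟨B, hB, rfl⟩, hPn⟩
        exact ⟨B, ⟨hB, fun hBU => hPn ((hAshB y B hB).2.2.trans hBU)⟩, rfl⟩
  -- the singleton families are locally finite
  have SSloc : ∀ (m : ℕ) (z : X), ∃ U ∈ nhds z, {P ∈ SS m | (P ∩ U).Nonempty}.Finite := by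
    intro m z
    set qb : Set (Set X) := {A | ∃ x : X, IsOpen ({x} : Set X) ∧ ({x} : Set X) ∈ Q m ∧
      x ≠ z ∧ A = {x}} with hqb2
    have hqbQ : qb ⊆ Q m := by
      rintro A ⟨x, hx1, hx2, hx3, rfl⟩
      exact hx2
    have heq := hHCP m id (fun P => subset_rfl) qb hqbQ
    set J : Set X := {x : X | IsOpen ({x} : Set X) ∧ ({x} : Set X) ∈ Q m ∧ x ≠ z} with hJdef
    have hset : (⋃ P ∈ qb, id P) = J := by
      ext u
      constructor
      · intro hu
        obtain ⟨A, hA, huA⟩ := Set.mem_iUnion₂.1 hu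
        obtain ⟨x, hx1, hx2, hx3, rfl⟩ := hA
        have : u = x := huA
        subst this
        exact ⟨hx1, hx2, hx3⟩
      · intro hu
        exact Set.mem_biUnion (⟨u, hu.1, hu.2.1, hu.2.2, rfl⟩ : ({u} : Set X) ∈ qb)
          (Set.mem_singleton u)
    have hset2 : (⋃ P ∈ qb, closure (id P)) = J := by
      ext u
      constructor
      · intro hu
        obtain ⟨A, hA, huA⟩ := Set.mem_iUnion₂.1 hu
        obtain ⟨x, hx1, hx2, hx3, rfl⟩ := hA
        rw [show closure (id ({x} : Set X)) = {x} from closure_singleton] at huA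
        have : u = x := huA
        subst this
        exact ⟨hx1, hx2, hx3⟩
      · intro hu
        refine Set.mem_biUnion (⟨u, hu.1, hu.2.1, hu.2.2, rfl⟩ : ({u} : Set X) ∈ qb) ?_
        rw [show closure (id ({u} : Set X)) = {u} from closure_singleton]
        exact Set.mem_singleton u
    have hclosed : IsClosed J := by
      have h3 : closure J = J := by
        rw [← hset, heq, hset2, hset]
      rw [← h3]
      exact isClosed_closure
    refine ⟨Jᶜ ∪ {z}, ?_, ?_⟩
    · -- Jᶜ ∪ {z} is a neighborhood of z
      refine Filter.mem_of_superset (hclosed.isOpen_compl.mem_nhds ?_) Set.subset_union_left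
      intro hzJ
      exact hzJ.2.2 rfl
    · refine (Set.finite_singleton ({z} : Set X)).subset ?_
      rintro A ⟨⟨x, hx1, hx2, rfl⟩, u, huA, huU⟩
      have hux : u = x := huA
      subst hux
      rw [Set.mem_singleton_iff]
      rcases huU with huc | huz
      · by_contra hne
        have hne' : u ≠ z := fun e => hne (by rw [e])
        exact huc ⟨hx1, hx2, hne'⟩
      · have : u = z := huz
        rw [this]
  -- the shrink families are locally finite
  have DDloc : ∀ (n : ℕ) (z : X), ∃ U ∈ nhds z, {P ∈ DD n | (P ∩ U).Nonempty}.Finite := by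
    intro n z
    by_cases hz : z ∈ T n
    · set qb : Set (Set X) := {B ∈ Q n | IsOpen B ∧ B.Nonempty ∧
        ∀ w ∈ B, ¬ IsOpen ({w} : Set X)} with hqb3
      set S : Set X → Set X := fun B => if B ∈ qb then shr n B else ∅ with hS3
      have hSsub : ∀ B, S B ⊆ B := by
        intro B
        by_cases hB : B ∈ qb
        · simp only [hS3, if_pos hB]
          exact (hshr n B hB.2).2.2.1
        · simp only [hS3, if_neg hB]
          exact Set.empty_subset _
      have heq := hHCP n S hSsub qb (Set.sep_subset _ _)
      have hzc : z ∉ closure (⋃ B ∈ qb, S B) := by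
        rw [heq]
        intro hmem
        obtain ⟨B, hB, hcl⟩ := Set.mem_iUnion₂.1 hmem
        rw [show S B = shr n B from by simp only [hS3, if_pos hB]] at hcl
        exact (hshr n B hB.2).2.2.2 z hcl hz
      refine ⟨(closure (⋃ B ∈ qb, S B))ᶜ, isClosed_closure.isOpen_compl.mem_nhds hzc, ?_⟩
      refine Set.finite_empty.subset ?_
      rintro A ⟨⟨B, hBQ, hBo, hBne2, hBI2, rfl⟩, u, huA, huU⟩
      have hBqb : B ∈ qb := ⟨hBQ, hBo, hBne2, hBI2⟩
      exact absurd (subset_closure (Set.mem_biUnion hBqb (by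
        rw [show S B = shr n B from by simp only [hS3, if_pos hBqb]]
        exact huA))) huU
    · have hex : ∃ U ∈ nhds z, {P ∈ Q n | (P ∩ U).Nonempty}.Finite := by
        by_contra hc
        push_neg at hc
        exact hz (fun U hU => hc U hU)
      obtain ⟨U, hU, hfin⟩ := hex
      refine ⟨U, hU, ?_⟩
      have hsub : {P ∈ DD n | (P ∩ U).Nonempty} ⊆ (shr n) '' {P ∈ Q n | (P ∩ U).Nonempty} := by
        rintro A ⟨⟨B, hBQ, hBo, hBne2, hBI2, rfl⟩, hmeet⟩
        refine ⟨B, ⟨hBQ, ?_⟩, rfl⟩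
        obtain ⟨u, hu1, hu2⟩ := hmeet
        exact ⟨u, (hshr n B ⟨hBo, hBne2, hBI2⟩).2.2.1 hu1, hu2⟩
      exact (hfin.image _).subset hsub
  -- assemble
  refine ⟨pb', hpb'strong, Q', ?_, ?_⟩
  · apply Set.Subset.antisymm
    · intro P hP
      obtain ⟨y, hPy⟩ := Set.mem_iUnion.1 hP
      by_cases hy : IsOpen ({y} : Set X)
      · have he : pb' y = {{y}} := by simp only [hpb'def, if_pos hy]
        rw [he, Set.mem_singleton_iff] at hPy
        subst hPy
        have hBU : ({y} : Set X) ∈ ⋃ x, pb x := Set.mem_iUnion.2 ⟨y, singMem y hy⟩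
        obtain ⟨m, hm⟩ := classEx _ hBU
        refine Set.mem_iUnion.2 ⟨2 * m, ?_⟩
        rw [hQ'eq]
        refine ⟨?_, hP⟩
        rw [if_pos (by omega : (2 * m) % 2 = 0), (by omega : (2 * m) / 2 = m)]
        exact ⟨y, hy, hm, rfl⟩
      · have he : pb' y = Ash '' (pb y) := by simp only [hpb'def, if_neg hy]
        rw [he] at hPy
        obtain ⟨B, hB, rfl⟩ := hPy
        by_cases h1 : ∃ w ∈ B, IsOpen ({w} : Set X)
        · have hc := h1.choose_spec
          have heA : Ash B = {h1.choose} := by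
            simp only [hAshdef]
            rw [dif_pos h1]
          have hBU : ({h1.choose} : Set X) ∈ ⋃ x, pb x :=
            Set.mem_iUnion.2 ⟨h1.choose, singMem _ hc.2⟩
          obtain ⟨m, hm⟩ := classEx _ hBU
          refine Set.mem_iUnion.2 ⟨2 * m, ?_⟩
          rw [hQ'eq]
          refine ⟨?_, hP⟩
          rw [if_pos (by omega : (2 * m) % 2 = 0), (by omega : (2 * m) / 2 = m)]
          exact ⟨h1.choose, hc.2, hm, heA⟩
        · have heA : Ash B = shr (nB B) B := by
            simp only [hAshdef]
            rw [dif_neg h1]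
          push_neg at h1
          have hBU : B ∈ ⋃ x, pb x := Set.mem_iUnion.2 ⟨y, hB⟩
          have hBQ : B ∈ Q (nB B) := hnB B (classEx _ hBU)
          refine Set.mem_iUnion.2 ⟨2 * (nB B) + 1, ?_⟩
          rw [hQ'eq]
          refine ⟨?_, hP⟩
          rw [if_neg (by omega : ¬ (2 * (nB B) + 1) % 2 = 0),
            (by omega : (2 * (nB B) + 1) / 2 = nB B)]
          exact ⟨B, hBQ, ((h y).1 B hB).1, ((h y).1 B hB).2, h1, heA⟩
    · intro P hP
      obtain ⟨k, hk⟩ := Set.mem_iUnion.1 hP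
      rw [hQ'eq] at hk
      exact hk.2
  · intro k x
    by_cases hk : k % 2 = 0
    · obtain ⟨U, hU, hfin⟩ := SSloc (k / 2) x
      refine ⟨U, hU, hfin.subset ?_⟩
      rintro P ⟨hP1, hP2⟩
      rw [hQ'eq] at hP1
      rw [if_pos hk] at hP1
      exact ⟨hP1.1, hP2⟩
    · obtain ⟨U, hU, hfin⟩ := DDloc (k / 2) x
      refine ⟨U, hU, hfin.subset ?_⟩
      rintro P ⟨hP1, hP2⟩
      rw [hQ'eq] at hP1
      rw [if_neg hk] at hP1
      exact ⟨hP1.1, hP2⟩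
end

section
/- If f : X → Y is a quasi-open closed continuous surjection and X is strongly π-metrizable, then Y is strongly π-metrizable. -/
open Set Topology

namespace Stmt17Aux

section Aux

variable {X Y : Type*} [TopologicalSpace X] [TopologicalSpace Y]

lemma discrete_mono {D D' : Set (Set X)} (h : IsDiscreteFam X D) (hsub : D' ⊆ D) :
    IsDiscreteFam X D' := by
  intro x
  obtain ⟨U, hU, hsing⟩ := h x
  exact ⟨U, hU, fun P hP P' hP' => hsing ⟨hsub hP.1, hP.2⟩ ⟨hsub hP'.1, hP'.2⟩⟩

/-- A union of closed subsets of the closures of the members of a discrete family is closed. -/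
lemma closed_biUnion_sel [T1Space X] {D : Set (Set X)} (hD : IsDiscreteFam X D)
    {sub : Set (Set X)} (hsub : sub ⊆ D) (t : Set X → Set X)
    (htc : ∀ P ∈ sub, IsClosed (t P)) (hts : ∀ P ∈ sub, t P ⊆ closure P) :
    IsClosed (⋃ P ∈ sub, t P) := by
  rw [← closure_subset_iff_isClosed]
  intro w hw
  obtain ⟨U, hU, hsing⟩ := hD w
  set N := interior U with hN
  have hNo : IsOpen N := isOpen_interior
  have hwN : w ∈ N := mem_interior_iff_mem_nhds.2 hU
  set S := ⋃ P ∈ sub, t P with hS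
  have hw2 : w ∈ closure (S ∩ N) := by
    rw [mem_closure_iff] at hw ⊢
    intro O hO hwO
    obtain ⟨a, haO, haS⟩ := hw (O ∩ N) (hO.inter hNo) ⟨hwO, hwN⟩
    exact ⟨a, haO.1, haS, haO.2⟩
  rcases (S ∩ N).eq_empty_or_nonempty with he | ⟨a, haS, haN⟩
  · rw [he, closure_empty] at hw2; exact absurd hw2 (notMem_empty w)
  · obtain ⟨P₀, hP₀, haP₀⟩ := mem_iUnion₂.1 haS
    have hmeet : ∀ P ∈ sub, ∀ b ∈ t P, b ∈ N → (P ∩ U).Nonempty := by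
      intro P hP b hb hbN
      have : b ∈ closure (N ∩ P) := IsOpen.inter_closure hNo ⟨hbN, hts P hP hb⟩
      rcases (N ∩ P).eq_empty_or_nonempty with h0 | ⟨p, hpN, hpP⟩
      · rw [h0, closure_empty] at this; exact absurd this (notMem_empty b)
      · exact ⟨p, hpP, interior_subset hpN⟩
    have hkey : S ∩ N ⊆ t P₀ := by
      rintro b ⟨hbS, hbN⟩
      obtain ⟨P₁, hP₁, hbP₁⟩ := mem_iUnion₂.1 hbS
      have : P₁ = P₀ :=
        hsing ⟨hsub hP₁, hmeet P₁ hP₁ b hbP₁ hbN⟩ ⟨hsub hP₀, hmeet P₀ hP₀ a haP₀ haN⟩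
      exact this ▸ hbP₁
    have : w ∈ closure (t P₀) := closure_mono hkey hw2
    rw [(htc P₀ hP₀).closure_eq] at this
    exact mem_iUnion₂.2 ⟨P₀, hP₀, this⟩

lemma closure_image_subset_of_closedmap {f : X → Y} (hcl : IsClosedMap f) (s : Set X) :
    closure (f '' s) ⊆ f '' closure s :=
  IsClosedMap.closure_image_subset hcl s

/-- Downstairs: unions of closures of pieces of images of a discrete family are closed. -/
lemma closed_biUnion_closure_image [T1Space X] {f : X → Y} (hc : Continuous f)
    (hcl : IsClosedMap f) {D : Set (Set X)} (hD : IsDiscreteFam X D)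
    {sub : Set (Set X)} (hsub : sub ⊆ D) (m : Set X → Set Y)
    (hm : ∀ P ∈ sub, m P ⊆ f '' P) :
    IsClosed (⋃ P ∈ sub, closure (m P)) := by
  have himg : (⋃ P ∈ sub, closure (m P))
      = f '' (⋃ P ∈ sub, (closure P ∩ f ⁻¹' (closure (m P)))) := by
    ext v; constructor
    · intro hv
      obtain ⟨P, hP, hvP⟩ := mem_iUnion₂.1 hv
      have h1 : closure (m P) ⊆ f '' closure P :=
        (closure_mono (hm P hP)).trans (closure_image_subset_of_closedmap hcl P)
      obtain ⟨x, hx, rfl⟩ := h1 hvP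
      exact ⟨x, mem_iUnion₂.2 ⟨P, hP, hx, hvP⟩, rfl⟩
    · rintro ⟨x, hx, rfl⟩
      obtain ⟨P, hP, hx1, hx2⟩ := mem_iUnion₂.1 hx
      exact mem_iUnion₂.2 ⟨P, hP, hx2⟩
  rw [himg]
  exact hcl _ (closed_biUnion_sel hD hsub _
    (fun P _ => isClosed_closure.inter (isClosed_closure.preimage hc))
    (fun P _ => inter_subset_left))

/-- A point with a finite strong π-base is isolated. -/
lemma isolated_of_finite_strong [T1Space X] {pbx : Set (Set X)} {x : X}
    (h : StrongPiBaseAt pbx x) (hfin : pbx.Finite) : IsOpen ({x} : Set X) := by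
  classical
  set bad := {P ∈ pbx | ¬ ∀ U : Set X, IsOpen U → x ∈ U → P ⊆ U} with hbad
  have hch : ∀ P : Set X, ∃ U : Set X, IsOpen U ∧ x ∈ U ∧ (P ∈ bad → ¬ P ⊆ U) := by
    intro P
    by_cases hP : P ∈ bad
    · obtain ⟨U, hUo, hxU, hns⟩ := by
        have := hP.2; push_neg at this; exact this
      exact ⟨U, hUo, hxU, fun _ => hns⟩
    · exact ⟨univ, isOpen_univ, mem_univ x, fun h' => absurd h' hP⟩
  choose Uf hUf1 hUf2 hUf3 using hch
  have hbadfin : bad.Finite := hfin.subset (sep_subset _ _)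
  set U0 : Set X := ⋂ P ∈ bad, Uf P with hU0
  have hU0o : IsOpen U0 := hbadfin.isOpen_biInter (fun P _ => hUf1 P)
  have hxU0 : x ∈ U0 := mem_iInter₂.2 fun P _ => hUf2 P
  obtain ⟨P₀, hP₀, hP₀sub⟩ := h.2.1 U0 hU0o hxU0
  have hP₀good : ∀ U : Set X, IsOpen U → x ∈ U → P₀ ⊆ U := by
    by_contra hcon
    have hP₀bad : P₀ ∈ bad := ⟨hP₀, hcon⟩
    exact hUf3 P₀ hP₀bad (hP₀sub.trans (biInter_subset_of_mem hP₀bad))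
  have hsub1 : P₀ ⊆ {x} := by
    intro u hu
    by_contra hux
    have : P₀ ⊆ {u}ᶜ := hP₀good _ isOpen_compl_singleton (by simp [Ne.symm hux])
    exact this hu rfl
  obtain ⟨p, hp⟩ := (h.1 P₀ hP₀).2
  have : P₀ = {x} := hsub1.antisymm (by rw [singleton_subset_iff, ← hsub1 hp]; exact hp)
  exact this ▸ (h.1 P₀ hP₀).1

end Aux

section Aux2

/-- Injective selection from a sequence of infinite sets. -/
lemma exists_injective_selection {α : Type*} (T : ℕ → Set α) (h : ∀ k, (T k).Infinite) :
    ∃ g : ℕ → α, (∀ k, g k ∈ T k) ∧ Function.Injective g := by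
  classical
  have hex : ∀ (L : List α) (k : ℕ), ∃ a, a ∈ T k ∧ a ∉ L := by
    intro L k
    obtain ⟨a, ha⟩ := ((h k).diff (L.finite_toSet)).nonempty
    exact ⟨a, ha.1, ha.2⟩
  let pick : List α → ℕ → α := fun L k => (hex L k).choose
  let hist : ℕ → List α := fun k => Nat.rec [] (fun k ih => ih ++ [pick ih k]) k
  let g : ℕ → α := fun k => pick (hist k) k
  have hg1 : ∀ k, g k ∈ T k ∧ g k ∉ hist k := fun k => (hex (hist k) k).choose_spec
  have hh : ∀ k, hist (k + 1) = hist k ++ [g k] := fun k => rfl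
  have hmem : ∀ j k, j < k → g j ∈ hist k := by
    intro j k hjk
    induction k with
    | zero => omega
    | succ k ih =>
      rw [hh]
      rcases Nat.lt_succ_iff_lt_or_eq.1 hjk with h' | h'
      · exact List.mem_append_left _ (ih h')
      · subst h'; exact List.mem_append_right _ (List.mem_singleton_self _)
  refine ⟨g, fun k => (hg1 k).1, ?_⟩
  intro j k hjk
  by_contra hne
  rcases Nat.lt_or_ge j k with h' | h'
  · exact (hg1 k).2 (hjk ▸ hmem j k h')
  · have h'' : k < j := lt_of_le_of_ne h' (Ne.symm hne)
    exact (hg1 j).2 (hjk ▸ hmem k j h'')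

/-- ℕ-coloring of a symmetric relation with finite degrees on a vertex set. -/
lemma exists_coloring {α : Type*} (R : α → α → Prop) (hsym : ∀ a b, R a b → R b a)
    (VT : Set α) (hdeg : ∀ a ∈ VT, {b | b ∈ VT ∧ R a b}.Finite) :
    ∃ χ : α → ℕ, ∀ a ∈ VT, ∀ b ∈ VT, a ≠ b → R a b → χ a ≠ χ b := by
  classical
  let r : α → α → Prop := WellOrderingRel
  have hwf : WellFounded r := IsWellFounded.wf
  let F : ∀ a : α, (∀ b, r b a → ℕ) → ℕ := fun a ih =>
    if h : ({c : ℕ | ∃ b, ∃ hb : r b a, b ∈ VT ∧ R a b ∧ ih b hb = c}ᶜ).Nonempty then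
      h.choose else 0
  let χ : α → ℕ := hwf.fix F
  have hfix : ∀ a, χ a = F a (fun b _ => χ b) := fun a => hwf.fix_eq F a
  have key : ∀ a ∈ VT, ∀ b ∈ VT, R a b → r b a → χ a ≠ χ b := by
    intro a ha b hb hR hr
    have hS : {c : ℕ | ∃ b', ∃ hb : r b' a, b' ∈ VT ∧ R a b' ∧ χ b' = c}.Finite := by
      apply Set.Finite.subset ((hdeg a ha).image χ)
      rintro c ⟨b', hb', hbVT, hRb, rfl⟩
      exact ⟨b', ⟨hbVT, hRb⟩, rfl⟩
    have hne : ({c : ℕ | ∃ b', ∃ hb : r b' a, b' ∈ VT ∧ R a b' ∧ χ b' = c}ᶜ).Nonempty :=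
      hS.infinite_compl.nonempty
    have hnotin : χ a ∉ {c : ℕ | ∃ b', ∃ hb : r b' a, b' ∈ VT ∧ R a b' ∧ χ b' = c} := by
      have : χ a ∈ ({c : ℕ | ∃ b', ∃ hb : r b' a, b' ∈ VT ∧ R a b' ∧ χ b' = c}ᶜ) := by
        rw [hfix a]
        simp only [F, dif_pos hne]
        exact hne.choose_spec
      exact this
    intro heq
    exact hnotin ⟨b, hr, hb, hR, heq.symm⟩
  refine ⟨χ, ?_⟩
  intro a ha b hb hab hR
  rcases @trichotomous _ r _ a b with h' | h' | h'
  · exact (key b hb a ha (hsym _ _ hR) h').symm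
  · exact absurd h' hab
  · exact key a ha b hb hR h'

end Aux2

section Aux3
variable {X Y : Type*} [TopologicalSpace X] [TopologicalSpace Y]

/-- Key witness lemma: in an open set with no isolated points, some point's fiber
touches the closures of only finitely many members of a discrete family. -/
lemma exists_finite_touch [T1Space X] [T1Space Y] {f : X → Y}
    (hc : Continuous f) (hs : Function.Surjective f) (hq : QuasiOpenMap f)
    (hcl : IsClosedMap f) (pb : X → Set (Set X)) (hpb : ∀ x, StrongPiBaseAt (pb x) x)
    {D : Set (Set X)} (hD : IsDiscreteFam X D) {G : Set Y} (hGo : IsOpen G)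
    (hGne : G.Nonempty) (hniso : ∀ z ∈ G, ¬ IsOpen ({z} : Set Y)) :
    ∃ z ∈ G, {Q' ∈ D | (f ⁻¹' {z} ∩ closure Q').Nonempty}.Finite := by
  classical
  by_contra hcon
  push_neg at hcon
  have hinf : ∀ z ∈ G, {Q' ∈ D | (f ⁻¹' {z} ∩ closure Q').Nonempty}.Infinite :=
    fun z hz => hcon z hz
  obtain ⟨z, hz⟩ := hGne
  set F : Set X := f ⁻¹' {z} with hF
  -- z is in the closure of the image of the complement of its fiber
  have hzcl : z ∈ closure (f '' Fᶜ) := by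
    rw [mem_closure_iff]
    intro O hO hzO
    have hO' : ∃ w ∈ O, w ≠ z := by
      by_contra hcc
      push_neg at hcc
      have : O = {z} := Set.Subset.antisymm (fun w hw => hcc w hw) (by simpa using hzO)
      exact hniso z hz (this ▸ hO)
    obtain ⟨w, hwO, hwz⟩ := hO'
    obtain ⟨ξ, rfl⟩ := hs w
    exact ⟨f ξ, hwO, ⟨ξ, fun hmem => hwz hmem, rfl⟩⟩
  have hzcl2 : z ∈ f '' closure Fᶜ := IsClosedMap.closure_image_subset hcl _ hzcl
  obtain ⟨x, hxcl, hfx⟩ := hzcl2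
  have hxF : x ∈ F := by simp [hF, hfx]
  -- pb x is infinite
  have hpbinf : (pb x).Infinite := by
    intro hfin
    have hxiso : IsOpen ({x} : Set X) := isolated_of_finite_strong (hpb x) hfin
    rw [mem_closure_iff] at hxcl
    obtain ⟨u, hu1, hu2⟩ := hxcl {x} hxiso rfl
    rw [mem_singleton_iff] at hu1
    exact hu2 (hu1 ▸ hxF)
  let e : ℕ ↪ ↥(pb x) := hpbinf.natEmbedding
  let Pm : ℕ → Set X := fun m => (e m : Set X)
  have hPminj : Function.Injective Pm := fun a b hab => e.injective (Subtype.val_injective hab)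
  have hPmmem : ∀ m, Pm m ∈ pb x := fun m => (e m).2
  -- choose points of Pm m outside the fiber
  have hu : ∀ m, ∃ u, u ∈ Pm m ∧ f u ≠ z := by
    intro m
    by_contra hgg
    push_neg at hgg
    have hsubz : f '' Pm m ⊆ {z} := by rintro v ⟨u', hu', rfl⟩; simp [hgg u' hu']
    obtain ⟨ho, hne⟩ := (hpb x).1 _ (hPmmem m)
    obtain ⟨v, hv⟩ := hq _ ho hne
    have hvz : v = z := hsubz (interior_subset hv)
    have : IsOpen ({z} : Set Y) := by
      have hsub2 : interior (f '' Pm m) = {z} := by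
        apply Subset.antisymm ((interior_subset).trans hsubz)
        intro w hw; rw [mem_singleton_iff] at hw; exact hw ▸ (hvz ▸ hv)
      exact hsub2 ▸ isOpen_interior
    exact hniso z hz this
  choose u hu1 hu2 using hu
  let zs : ℕ → Y := fun m => f (u m)
  have hzs : ∀ m, zs m ≠ z := hu2
  -- convergence of zs to z
  have hconv : ∀ V : Set Y, IsOpen V → z ∈ V → {m | zs m ∉ V}.Finite := by
    intro V hV hzV
    have h1 : {P ∈ pb x | ¬ P ⊆ f ⁻¹' V}.Finite :=
      (hpb x).2.2 _ (hV.preimage hc) (by simp [hfx, hzV])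
    have h2 : {m | zs m ∉ V} ⊆ Pm ⁻¹' {P ∈ pb x | ¬ P ⊆ f ⁻¹' V} := by
      intro m hm
      refine ⟨hPmmem m, fun hsub => hm ?_⟩
      exact hsub (hu1 m)
    exact Finite.subset (h1.preimage (Set.injOn_of_injective hPminj)) h2
  -- indices with zs m ∈ G
  have hsG : {m | zs m ∈ G}.Infinite := by
    have : {m | zs m ∉ G}.Finite := hconv G hGo hz
    have := this.infinite_compl
    simpa [compl_setOf] using this
  let me' : ℕ ↪ ↥{m | zs m ∈ G} := hsG.natEmbedding
  let ms : ℕ → ℕ := fun k => (me' k : ℕ)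
  have hmsinj : Function.Injective ms := fun a b hab => me'.injective (Subtype.val_injective hab)
  have hmsG : ∀ k, zs (ms k) ∈ G := fun k => (me' k).2
  -- injective selection of touched members
  have hTinf : ∀ k, {Q' ∈ D | (f ⁻¹' {zs (ms k)} ∩ closure Q').Nonempty}.Infinite :=
    fun k => hinf _ (hmsG k)
  obtain ⟨Qk, hQk, hQkinj⟩ := exists_injective_selection _ hTinf
  have hQkD : ∀ k, Qk k ∈ D := fun k => (hQk k).1
  have hQkne : ∀ k, (f ⁻¹' {zs (ms k)} ∩ closure (Qk k)).Nonempty := fun k => (hQk k).2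
  choose v hv1 hv2 using hQkne
  -- C := range v is closed
  set C : Set X := Set.range v with hC
  have hCclosed : IsClosed C := by
    rw [← closure_subset_iff_isClosed]
    intro w hw
    obtain ⟨U, hU, hsing⟩ := hD w
    set N := interior U with hN
    have hNo : IsOpen N := isOpen_interior
    have hwN : w ∈ N := mem_interior_iff_mem_nhds.2 hU
    have hw2 : w ∈ closure (C ∩ N) := by
      rw [mem_closure_iff] at hw ⊢
      intro O hO hwO
      obtain ⟨a, haO, haC⟩ := hw (O ∩ N) (hO.inter hNo) ⟨hwO, hwN⟩
      exact ⟨a, haO.1, haC, haO.2⟩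
    have hmeet : ∀ k, v k ∈ N → (Qk k ∩ U).Nonempty := by
      intro k hk
      have : v k ∈ closure (N ∩ Qk k) := IsOpen.inter_closure hNo ⟨hk, hv2 k⟩
      rcases (N ∩ Qk k).eq_empty_or_nonempty with h0 | ⟨p, hpN, hpQ⟩
      · rw [h0, closure_empty] at this; exact absurd this (notMem_empty _)
      · exact ⟨p, hpQ, interior_subset hpN⟩
    rcases (C ∩ N).eq_empty_or_nonempty with he | ⟨a, haC, haN⟩
    · rw [he, closure_empty] at hw2; exact absurd hw2 (notMem_empty w)
    · obtain ⟨k₀, hk₀⟩ := haC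
      have hkey : C ∩ N ⊆ {v k₀} := by
        rintro b ⟨hbC, hbN⟩
        obtain ⟨k₁, hk₁⟩ := hbC
        have : Qk k₁ = Qk k₀ :=
          hsing ⟨hQkD k₁, hmeet k₁ (hk₁ ▸ hbN)⟩ ⟨hQkD k₀, hmeet k₀ (hk₀ ▸ haN)⟩
        have : k₁ = k₀ := hQkinj this
        rw [← hk₁, this]; rfl
      have hcl' : w ∈ closure {v k₀} := closure_mono hkey hw2
      rw [closure_singleton, mem_singleton_iff] at hcl'
      exact hcl' ▸ ⟨k₀, rfl⟩
  -- the image of C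
  have hfv : ∀ k, f (v k) = zs (ms k) := by
    intro k
    have := hv1 k
    simpa [mem_preimage, mem_singleton_iff] using this
  have hzC : z ∉ f '' C := by
    rintro ⟨x', ⟨k, rfl⟩, hfx'⟩
    exact hzs (ms k) (by rw [← hfv k, hfx'])
  have hzclC : z ∈ closure (f '' C) := by
    rw [mem_closure_iff]
    intro O hO hzO
    have hfin : {m | zs m ∉ O}.Finite := hconv O hO hzO
    have : ∃ k, ms k ∉ {m | zs m ∉ O} := by
      by_contra hall
      push_neg at hall
      have : Set.range ms ⊆ {m | zs m ∉ O} := by rintro _ ⟨k, rfl⟩; exact hall k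
      exact (Set.infinite_range_of_injective hmsinj) (hfin.subset this)
    obtain ⟨k, hk⟩ := this
    simp only [mem_setOf_eq, not_not] at hk
    exact ⟨zs (ms k), hk, ⟨v k, ⟨k, rfl⟩, hfv k⟩⟩
  have : IsClosed (f '' C) := hcl C hCclosed
  rw [this.closure_eq] at hzclC
  exact hzC hzclC

end Aux3

end Stmt17Aux

open Stmt17Aux

theorem stmt17 {X Y : Type*} [TopologicalSpace X] [TopologicalSpace Y]
    [T1Space X] [RegularSpace X] [T1Space Y] [RegularSpace Y]
    (f : X → Y) (hc : Continuous f) (hs : Function.Surjective f)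
    (hq : QuasiOpenMap f) (hcl : IsClosedMap f)
    (hX : StronglyPiMetrizable X) : StronglyPiMetrizable Y := by
  classical
  obtain ⟨pb, hpb, Q, hQeq, hQd⟩ := hX
  rcases isEmpty_or_nonempty Y with hYe | hYne
  · refine ⟨fun _ => ∅, fun y => (hYe.false y).elim, fun _ => ∅, by simp, fun n x => (hYe.false x).elim⟩
  obtain ⟨y₀⟩ := hYne
  set σ : Y → X := Function.surjInv hs with hσdef
  have hσ : ∀ y, f (σ y) = y := fun y => Function.surjInv_eq hs y
  set used : Set (Set X) := ⋃ y, pb (σ y) with husedDef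
  have husedsub : used ⊆ ⋃ n, Q n := by
    rw [← hQeq]
    exact iUnion_subset fun y => subset_iUnion (fun x => pb x) (σ y)
  have hPopen : ∀ P ∈ used, IsOpen P ∧ P.Nonempty := by
    intro P hP
    obtain ⟨y, hy⟩ := mem_iUnion.1 hP
    exact (hpb (σ y)).1 P hy
  have hidx : ∀ P ∈ used, ∃ n, P ∈ Q n := fun P hP => mem_iUnion.1 (husedsub hP)
  set nIdx : Set X → ℕ := fun P => if h : ∃ n, P ∈ Q n then Nat.find h else 0 with hnIdxdef
  have hnIdx : ∀ P ∈ used, P ∈ Q (nIdx P) := by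
    intro P hP
    have h := hidx P hP
    rw [hnIdxdef]
    simp only [dif_pos h]
    exact Nat.find_spec h
  set usedN : ℕ → Set (Set X) := fun n => {P ∈ used | nIdx P = n} with husedNdef
  have husedNQ : ∀ n, usedN n ⊆ Q n := fun n P hP => hP.2 ▸ hnIdx P hP.1
  have husedNd : ∀ n, IsDiscreteFam X (usedN n) := fun n => discrete_mono (hQd n) (husedNQ n)
  have husedNused : ∀ n, usedN n ⊆ used := fun n P hP => hP.1
  set Gp : Set X → Set Y := fun P => interior (f '' P) with hGpdef
  have hGpo : ∀ P, IsOpen (Gp P) := fun P => isOpen_interior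
  have hGpn : ∀ P ∈ used, (Gp P).Nonempty := fun P hP => hq P (hPopen P hP).1 (hPopen P hP).2
  have hGpf : ∀ P, Gp P ⊆ f '' P := fun P => interior_subset
  set iso : Set X → Prop := fun P => ∃ z ∈ Gp P, IsOpen ({z} : Set Y) with hisodef
  set zi : Set X → Y := fun P => if h : iso P then h.choose else y₀ with hzidef
  have hzi : ∀ P, iso P → zi P ∈ Gp P ∧ IsOpen ({zi P} : Set Y) := by
    intro P h
    have h1 : zi P = h.choose := by rw [hzidef]; exact dif_pos h
    rw [h1]
    exact h.choose_spec
  have hwit : ∀ P, P ∈ used → ¬ iso P →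
      ∃ z ∈ Gp P, {Q' ∈ usedN (nIdx P) | (f ⁻¹' {z} ∩ closure Q').Nonempty}.Finite := by
    intro P hPu hPni
    refine exists_finite_touch hc hs hq hcl pb hpb (husedNd (nIdx P)) (hGpo P) (hGpn P hPu) ?_
    intro z hz hop
    exact hPni ⟨z, hz, hop⟩
  set zw : Set X → Y := fun P => if h : P ∈ used ∧ ¬ iso P then (hwit P h.1 h.2).choose else y₀
    with hzwdef
  set Sset : Set X → Set (Set X) :=
    fun P => {Q' ∈ usedN (nIdx P) | (f ⁻¹' {zw P} ∩ closure Q').Nonempty} with hSdef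
  have hzweq : ∀ P (h1 : P ∈ used) (h2 : ¬ iso P), zw P = (hwit P h1 h2).choose := by
    intro P h1 h2
    rw [hzwdef]
    exact dif_pos ⟨h1, h2⟩
  have hzw : ∀ P, P ∈ used → ¬ iso P → zw P ∈ Gp P ∧ (Sset P).Finite := by
    intro P h1 h2
    have hspec := (hwit P h1 h2).choose_spec
    constructor
    · rw [hzweq P h1 h2]; exact hspec.1
    · rw [hSdef]
      simp only
      rw [hzweq P h1 h2]
      exact hspec.2
  set Rel : Set X → Set X → Prop := fun P P' => P' ∈ Sset P ∧ P ∈ Sset P' with hReldef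
  have hRelsym : ∀ P P', Rel P P' → Rel P' P := fun P P' h => ⟨h.2, h.1⟩
  have hχex : ∀ n : ℕ, ∃ χ : Set X → ℕ,
      ∀ P ∈ {P ∈ usedN n | ¬ iso P}, ∀ P' ∈ {P ∈ usedN n | ¬ iso P},
        P ≠ P' → Rel P P' → χ P ≠ χ P' := by
    intro n
    apply exists_coloring Rel hRelsym
    intro P hP
    apply Set.Finite.subset (hzw P (husedNused n hP.1) hP.2).2
    intro P' hP'
    exact hP'.2.1
  choose χ hχ using hχex
  have hsubclosed : ∀ P,
      IsClosed (f '' (⋃ Q' ∈ (usedN (nIdx P) \ insert P (Sset P)), closure Q')) := by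
    intro P
    exact hcl _ (closed_biUnion_sel (husedNd (nIdx P)) diff_subset closure
      (fun _ _ => isClosed_closure) (fun _ _ => subset_rfl))
  set Wp : Set X → Set Y :=
    fun P => Gp P \ f '' (⋃ Q' ∈ (usedN (nIdx P) \ insert P (Sset P)), closure Q') with hWdef
  have hWo : ∀ P, IsOpen (Wp P) := fun P => (hGpo P).sdiff (hsubclosed P)
  have hWG : ∀ P, Wp P ⊆ Gp P := fun P => diff_subset
  have hWz : ∀ P, P ∈ used → ¬ iso P → zw P ∈ Wp P := by
    intro P h1 h2
    refine ⟨(hzw P h1 h2).1, ?_⟩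
    rintro ⟨x, hx, hfxeq⟩
    obtain ⟨Q', hQ'mem, hxQ'⟩ := mem_iUnion₂.1 hx
    refine hQ'mem.2 (mem_insert_iff.2 (Or.inr ⟨hQ'mem.1, ⟨x, ?_, hxQ'⟩⟩))
    simp [hfxeq]
  have hshrink : ∀ P, P ∈ used → ¬ iso P →
      ∃ V : Set Y, IsOpen V ∧ zw P ∈ V ∧ closure V ⊆ Wp P := by
    intro P h1 h2
    obtain ⟨t, ht, htc, hts⟩ := exists_mem_nhds_isClosed_subset ((hWo P).mem_nhds (hWz P h1 h2))
    exact ⟨interior t, isOpen_interior, mem_interior_iff_mem_nhds.2 ht,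
      (closure_minimal interior_subset htc).trans hts⟩
  set Vp : Set X → Set Y :=
    fun P => if h : P ∈ used ∧ ¬ iso P then (hshrink P h.1 h.2).choose else ∅ with hVpdef
  have hVp : ∀ P, P ∈ used → ¬ iso P →
      IsOpen (Vp P) ∧ zw P ∈ Vp P ∧ closure (Vp P) ⊆ Wp P := by
    intro P h1 h2
    have heq : Vp P = (hshrink P h1 h2).choose := by rw [hVpdef]; exact dif_pos ⟨h1, h2⟩
    rw [heq]
    exact (hshrink P h1 h2).choose_spec
  set member : Set X → Set Y := fun P => if iso P then {zi P} else Vp P with hmemdef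
  have hmem_iso : ∀ P, iso P → member P = {zi P} := by
    intro P h; rw [hmemdef]; exact if_pos h
  have hmem_niso : ∀ P, ¬ iso P → member P = Vp P := by
    intro P h; rw [hmemdef]; exact if_neg h
  have hmemfacts : ∀ P, P ∈ used →
      IsOpen (member P) ∧ (member P).Nonempty ∧ member P ⊆ f '' P := by
    intro P hP
    by_cases h : iso P
    · rw [hmem_iso P h]
      exact ⟨(hzi P h).2, singleton_nonempty _, singleton_subset_iff.2 (hGpf P (hzi P h).1)⟩
    · rw [hmem_niso P h]
      obtain ⟨h1, h2, h3⟩ := hVp P hP h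
      exact ⟨h1, ⟨zw P, h2⟩, fun v hv => hGpf P ((h3 (subset_closure hv)).1)⟩
  set cls1 : ℕ → Set (Set X) := fun n => {P ∈ usedN n | iso P} with hcls1def
  set cls2 : ℕ → ℕ → Set (Set X) := fun n c => {P ∈ usedN n | ¬ iso P ∧ χ n P = c} with hcls2def
  set QY : ℕ → Set (Set Y) := fun k =>
    if (Nat.unpair k).2 = 0 then member '' cls1 (Nat.unpair k).1
    else member '' cls2 (Nat.unpair k).1 ((Nat.unpair k).2 - 1) with hQYdef
  refine ⟨fun y => member '' (pb (σ y)), ?_, QY, ?_, ?_⟩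
  · intro y
    have hsubused : pb (σ y) ⊆ used := by
      rw [husedDef]; exact subset_iUnion (fun y' => pb (σ y')) y
    refine ⟨?_, ?_, ?_⟩
    · rintro m ⟨P, hP, rfl⟩
      exact ⟨(hmemfacts P (hsubused hP)).1, (hmemfacts P (hsubused hP)).2.1⟩
    · intro U hUo hyU
      have hmemU : σ y ∈ f ⁻¹' U := by simp only [mem_preimage, hσ y]; exact hyU
      obtain ⟨P, hP, hPsub⟩ := (hpb (σ y)).2.1 _ (hUo.preimage hc) hmemU
      refine ⟨member P, ⟨P, hP, rfl⟩, ?_⟩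
      calc member P ⊆ f '' P := (hmemfacts P (hsubused hP)).2.2
        _ ⊆ f '' (f ⁻¹' U) := image_mono hPsub
        _ ⊆ U := image_preimage_subset f U
    · intro U hUo hyU
      have hmemU : σ y ∈ f ⁻¹' U := by simp only [mem_preimage, hσ y]; exact hyU
      have hbadfin := (hpb (σ y)).2.2 _ (hUo.preimage hc) hmemU
      apply Finite.subset (hbadfin.image member)
      rintro m ⟨⟨P, hP, rfl⟩, hm⟩
      refine ⟨P, ⟨hP, ?_⟩, rfl⟩
      intro hPsub
      apply hm
      calc member P ⊆ f '' P := (hmemfacts P (hsubused hP)).2.2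
        _ ⊆ f '' (f ⁻¹' U) := image_mono hPsub
        _ ⊆ U := image_preimage_subset f U
  · apply Subset.antisymm
    · intro m hm
      obtain ⟨y, hy⟩ := mem_iUnion.1 hm
      obtain ⟨P, hP, rfl⟩ := hy
      have hPu : P ∈ used := by
        rw [husedDef]; exact mem_iUnion.2 ⟨y, hP⟩
      have hPN : P ∈ usedN (nIdx P) := ⟨hPu, rfl⟩
      by_cases h : iso P
      · refine mem_iUnion.2 ⟨Nat.pair (nIdx P) 0, ?_⟩
        rw [hQYdef]
        simp only [Nat.unpair_pair]
        exact ⟨P, ⟨hPN, h⟩, rfl⟩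
      · refine mem_iUnion.2 ⟨Nat.pair (nIdx P) (χ (nIdx P) P + 1), ?_⟩
        rw [hQYdef]
        simp only [Nat.unpair_pair]
        rw [if_neg (Nat.succ_ne_zero _)]
        exact ⟨P, ⟨hPN, h, by simp⟩, rfl⟩
    · intro m hm
      obtain ⟨k, hk⟩ := mem_iUnion.1 hm
      simp only [hQYdef] at hk
      have hback : ∀ P, P ∈ used → member P ∈ ⋃ y, member '' (pb (σ y)) := by
        intro P hPu
        rw [husedDef] at hPu
        obtain ⟨y, hy⟩ := mem_iUnion.1 hPu
        exact mem_iUnion.2 ⟨y, mem_image_of_mem member hy⟩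
      by_cases h : (Nat.unpair k).2 = 0
      · rw [if_pos h] at hk
        obtain ⟨P, hP, rfl⟩ := hk
        exact hback P (husedNused _ hP.1)
      · rw [if_neg h] at hk
        obtain ⟨P, hP, rfl⟩ := hk
        exact hback P (husedNused _ hP.1)
  · intro k
    by_cases hk : (Nat.unpair k).2 = 0
    · have hQYk : QY k = member '' cls1 (Nat.unpair k).1 := by
        simp only [hQYdef]; rw [if_pos hk]
      rw [hQYk]
      set n := (Nat.unpair k).1 with hn
      intro w
      set sub : Set (Set X) := {P ∈ cls1 n | zi P ≠ w} with hsubdef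
      have hsubN : sub ⊆ usedN n := fun P hP => hP.1.1
      have hKclosed : IsClosed (⋃ P ∈ sub, closure ({zi P} : Set Y)) := by
        apply closed_biUnion_closure_image hc hcl (husedNd n) hsubN
        intro P hP
        exact singleton_subset_iff.2 (hGpf P (hzi P hP.1.2).1)
      set U := (⋃ P ∈ sub, closure ({zi P} : Set Y))ᶜ with hUdef
      have hwU : w ∈ U := by
        intro hw
        obtain ⟨P, hP, hwP⟩ := mem_iUnion₂.1 hw
        rw [closure_singleton, mem_singleton_iff] at hwP
        exact hP.2 hwP.symm
      refine ⟨U, (hKclosed.isOpen_compl).mem_nhds hwU, ?_⟩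
      have hforce : ∀ P ∈ cls1 n, (member P ∩ U).Nonempty → member P = {w} := by
        intro P hP hne
        have hmP : member P = {zi P} := hmem_iso P hP.2
        have hz1 : zi P = w := by
          by_contra hzz
          obtain ⟨q, hq1, hq2⟩ := hne
          rw [hmP, mem_singleton_iff] at hq1
          apply hq2
          refine mem_iUnion₂.2 ⟨P, ⟨hP, hzz⟩, ?_⟩
          rw [hq1]
          exact subset_closure rfl
        rw [hmP, hz1]
      rintro m ⟨⟨P, hP, rfl⟩, hne⟩ m' ⟨⟨P', hP', rfl⟩, hne'⟩
      rw [hforce P hP hne, hforce P' hP' hne']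
    · have hQYk : QY k = member '' cls2 (Nat.unpair k).1 ((Nat.unpair k).2 - 1) := by
        simp only [hQYdef]; rw [if_neg hk]
      rw [hQYk]
      set n := (Nat.unpair k).1 with hn
      set c := (Nat.unpair k).2 - 1 with hcdefn
      intro w
      have hdata : ∀ P ∈ cls2 n c, P ∈ used ∧ ¬ iso P ∧ nIdx P = n := by
        intro P hP
        exact ⟨hP.1.1, hP.2.1, hP.1.2⟩
      set E : Set (Set X) := {P ∈ cls2 n c | w ∈ closure (Vp P)} with hEdef
      have hVpW : ∀ P ∈ cls2 n c, closure (Vp P) ⊆ Wp P := by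
        intro P hP
        exact (hVp P (hdata P hP).1 (hdata P hP).2.1).2.2
      have hVpim : ∀ P ∈ cls2 n c, Vp P ⊆ f '' P := by
        intro P hP
        exact fun v hv => hGpf P (hWG P (hVpW P hP (subset_closure hv)))
      have hE : E.Subsingleton := by
        intro P hPE P' hP'E
        by_contra hne
        have hP := hPE.1
        have hP' := hP'E.1
        have key : ∀ P₁ P₂, P₁ ∈ cls2 n c → P₂ ∈ cls2 n c → P₁ ≠ P₂ →
            w ∈ closure (Vp P₁) → w ∈ closure (Vp P₂) → P₂ ∈ Sset P₁ := by
          intro P₁ P₂ h₁ h₂ h₁₂ hw₁ hw₂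
          have hwW₁ : w ∈ Wp P₁ := hVpW P₁ h₁ hw₁
          have hsub2 : closure (Vp P₂) ⊆ f '' closure P₂ :=
            (closure_mono (hVpim P₂ h₂)).trans (IsClosedMap.closure_image_subset hcl P₂)
          obtain ⟨xh, hxh, hfxh⟩ := hsub2 hw₂
          by_contra hnotS
          have hP₂diff : P₂ ∈ usedN (nIdx P₁) \ insert P₁ (Sset P₁) := by
            constructor
            · rw [(hdata P₁ h₁).2.2]
              exact h₂.1
            · intro hmem
              rcases mem_insert_iff.1 hmem with h' | h'
              · exact h₁₂ h'.symm
              · exact hnotS h'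
          apply hwW₁.2
          exact ⟨xh, mem_iUnion₂.2 ⟨P₂, hP₂diff, hxh⟩, hfxh⟩
        have hRel : Rel P P' := ⟨key P P' hP hP' hne hPE.2 hP'E.2,
          key P' P hP' hP (Ne.symm hne) hP'E.2 hPE.2⟩
        exact hχ n P ⟨hP.1, hP.2.1⟩ P' ⟨hP'.1, hP'.2.1⟩ hne hRel (by rw [hP.2.2, hP'.2.2])
      set sub : Set (Set X) := cls2 n c \ E with hsubdef
      have hsubN : sub ⊆ usedN n := fun P hP => hP.1.1
      have hKclosed : IsClosed (⋃ P ∈ sub, closure (Vp P)) := by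
        apply closed_biUnion_closure_image hc hcl (husedNd n) hsubN
        intro P hP
        exact hVpim P hP.1
      set U := (⋃ P ∈ sub, closure (Vp P))ᶜ with hUdef
      have hwU : w ∈ U := by
        intro hw
        obtain ⟨P, hPsub, hwP⟩ := mem_iUnion₂.1 hw
        exact hPsub.2 ⟨hPsub.1, hwP⟩
      refine ⟨U, (hKclosed.isOpen_compl).mem_nhds hwU, ?_⟩
      have hforce : ∀ P ∈ cls2 n c, (member P ∩ U).Nonempty → P ∈ E := by
        intro P hP hne
        by_contra hPE
        obtain ⟨q, hq1, hq2⟩ := hne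
        apply hq2
        rw [hmem_niso P (hdata P hP).2.1] at hq1
        exact mem_iUnion₂.2 ⟨P, ⟨hP, hPE⟩, subset_closure hq1⟩
      rintro m ⟨⟨P, hP, rfl⟩, hne⟩ m' ⟨⟨P', hP', rfl⟩, hne'⟩
      rw [hE (hforce P hP hne) (hforce P' hP' hne')]
end

section
/- If X_n is strongly π-metrizable for each n ∈ ℕ, then the countable product X = ∏_{n∈ℕ} X_n is strongly π-metrizable. -/
open Set Topology

lemma exists_seq_aux {Y : Type*} [TopologicalSpace Y] {pb : Set (Set Y)} {y : Y}
    (h : StrongPiBaseAt pb y) :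
    ∃ p : ℕ → Set Y, (∀ m, p m ∈ pb) ∧
      ∀ U : Set Y, IsOpen U → y ∈ U → ∀ᶠ m in Filter.atTop, p m ⊆ U := by
  obtain ⟨h1, h2, h3⟩ := h
  by_cases hfin : pb.Finite
  · have key : ∃ P ∈ pb, ∀ U : Set Y, IsOpen U → y ∈ U → P ⊆ U := by
      by_contra hcon
      push_neg at hcon
      choose! U hUo hUy hUP using hcon
      have hopen : IsOpen (⋂ P ∈ pb, U P) := hfin.isOpen_biInter hUo
      have hy : y ∈ ⋂ P ∈ pb, U P := mem_iInter₂.mpr hUy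
      obtain ⟨P, hP, hsub⟩ := h2 _ hopen hy
      exact hUP P hP (hsub.trans (biInter_subset_of_mem hP))
    obtain ⟨P, hP, hPU⟩ := key
    exact ⟨fun _ => P, fun _ => hP,
      fun U hU hyU => Filter.Eventually.of_forall fun m => hPU U hU hyU⟩
  · have hinf : pb.Infinite := hfin
    set e := Set.Infinite.natEmbedding pb hinf with he
    refine ⟨fun m => (e m : Set Y), fun m => (e m).2, fun U hU hyU => ?_⟩
    rw [← Nat.cofinite_eq_atTop]
    refine Filter.eventually_cofinite.mpr ?_
    have hinj : Function.Injective (fun m => ((e m : Set Y))) :=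
      Subtype.coe_injective.comp e.injective
    refine ((h3 U hU hyU).preimage hinj.injOn).subset ?_
    intro m hm
    exact ⟨(e m).2, hm⟩

theorem stmt18 (X : ℕ → Type*) [∀ n, TopologicalSpace (X n)]
    [∀ n, T1Space (X n)] [∀ n, RegularSpace (X n)]
    (h : ∀ n, StronglyPiMetrizable (X n)) :
    StronglyPiMetrizable (∀ n, X n) := by
  choose pb hpb Q hQeq hQdisc using h
  choose p hp1 hp2 using fun (n : ℕ) (y : X n) => exists_seq_aux (hpb n y)
  -- the product sequence
  set q : (∀ n, X n) → ℕ → Set (∀ n, X n) :=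
    fun x m => Set.pi (Set.Iio m) (fun i => p i (x i) m) with hq
  have hpopen : ∀ (n : ℕ) (y : X n) (m : ℕ), IsOpen (p n y m) ∧ (p n y m).Nonempty :=
    fun n y m => (hpb n y).1 _ (hp1 n y m)
  have hqopen : ∀ x m, IsOpen (q x m) :=
    fun x m => isOpen_set_pi (Set.finite_Iio m) (fun i _ => (hpopen i (x i) m).1)
  have hqne : ∀ x m, (q x m).Nonempty := by
    intro x m
    choose w hw using fun i => (hpopen i (x i) m).2
    refine ⟨fun i => if hi : i < m then w i else x i, fun i hi => ?_⟩
    simp only [Set.mem_Iio] at hi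
    simp [hi, hw i]
  have hqev : ∀ x (U : Set (∀ n, X n)), IsOpen U → x ∈ U →
      ∀ᶠ m in Filter.atTop, q x m ⊆ U := by
    intro x U hU hxU
    obtain ⟨I, t, hIt, hItU⟩ := isOpen_pi_iff.mp hU x hxU
    have h1 : ∀ᶠ m in Filter.atTop, ∀ i ∈ I, p i (x i) m ⊆ t i := by
      rw [Filter.eventually_all_finset]
      exact fun i hi => hp2 i (x i) (t i) (hIt i hi).1 (hIt i hi).2
    have h2 : ∀ᶠ m in Filter.atTop, ∀ i ∈ I, i < m := by
      refine Filter.eventually_atTop.mpr ⟨I.sup id + 1, fun m hm i hi => ?_⟩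
      exact lt_of_lt_of_le (Nat.lt_succ_of_le (Finset.le_sup (f := id) hi)) hm
    filter_upwards [h1, h2] with m hm1 hm2
    intro z hz
    refine hItU ?_
    intro i hi
    exact hm1 i hi (hz i (Set.mem_Iio.mpr (hm2 i hi)))
  refine ⟨fun x => Set.range (q x), ?_, ?_⟩
  · intro x
    refine ⟨?_, ?_, ?_⟩
    · rintro P ⟨m, rfl⟩
      exact ⟨hqopen x m, hqne x m⟩
    · intro U hU hxU
      obtain ⟨m, hm⟩ := (hqev x U hU hxU).exists
      exact ⟨q x m, ⟨m, rfl⟩, hm⟩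
    · intro U hU hxU
      obtain ⟨M, hM⟩ := Filter.eventually_atTop.mp (hqev x U hU hxU)
      have : {P ∈ Set.range (q x) | ¬ P ⊆ U} ⊆ q x '' (Set.Iio M) := by
        rintro P ⟨⟨m, rfl⟩, hnsub⟩
        refine ⟨m, ?_, rfl⟩
        by_contra hm
        exact hnsub (hM m (le_of_not_gt hm))
      exact ((Set.finite_Iio M).image _).subset this
  · -- σ-discreteness
    classical
    set κ := (Σ m : ℕ, Fin m → ℕ) with hκ
    set F : κ → Set (Set (∀ n, X n)) := fun c =>
      {S | ∃ x : ∀ n, X n, (∀ i : Fin c.1, p i (x i) c.1 ∈ Q i (c.2 i)) ∧ S = q x c.1}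
      with hF
    refine ⟨fun n => ⋃ (c : κ) (_ : Encodable.encode c = n), F c, ?_, ?_⟩
    · ext S
      simp only [Set.mem_iUnion, Set.mem_range]
      constructor
      · rintro ⟨x, m, rfl⟩
        have hmem : ∀ i : ℕ, ∃ j, p i (x i) m ∈ Q i j := by
          intro i
          have : p i (x i) m ∈ ⋃ j, Q i j := by
            rw [← hQeq i]
            exact Set.mem_iUnion.mpr ⟨x i, hp1 i (x i) m⟩
          exact Set.mem_iUnion.mp this
        choose k hk using hmem
        refine ⟨Encodable.encode (⟨m, fun i : Fin m => k i⟩ : κ),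
          ⟨m, fun i : Fin m => k i⟩, rfl, x, fun i => hk i, rfl⟩
      · rintro ⟨n, c, hc, x, hx, rfl⟩
        exact ⟨x, c.1, rfl⟩
    · intro n z
      -- at most one c with encode c = n
      by_cases hex : ∃ c : κ, Encodable.encode c = n ∧ (F c).Nonempty
      · obtain ⟨c, hcn, -⟩ := hex
        obtain ⟨m, k⟩ := c
        choose U hU hUsub using fun i : Fin m => hQdisc i (k i) (z i)
        refine ⟨Set.pi (Set.Iio m) (fun i => if hi : i < m then U ⟨i, hi⟩ else Set.univ),
          set_pi_mem_nhds (Set.finite_Iio m) (fun i hi => ?_), ?_⟩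
        · simp only [Set.mem_Iio] at hi
          simpa [hi] using hU ⟨i, hi⟩
        · rintro P ⟨hPmem, w, hwP, hwV⟩ P' ⟨hPmem', w', hwP', hwV'⟩
          simp only [Set.mem_iUnion] at hPmem hPmem'
          obtain ⟨c', hc', x, hx, rfl⟩ := hPmem
          obtain ⟨c'', hc'', x', hx', rfl⟩ := hPmem'
          have hcc' : c' = (⟨m, k⟩ : κ) := Encodable.encode_injective (hc'.trans hcn.symm)
          have hcc'' : c'' = (⟨m, k⟩ : κ) := Encodable.encode_injective (hc''.trans hcn.symm)
          subst hcc' hcc''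
          have key : ∀ i : Fin m, p i (x i) m = p i (x' i) m := by
            intro i
            refine hUsub i ⟨hx i, w i, hwP i i.2, ?_⟩ ⟨hx' i, w' i, hwP' i i.2, ?_⟩
            · have := hwV i (Set.mem_Iio.mpr i.2)
              simpa [i.2] using this
            · have := hwV' i (Set.mem_Iio.mpr i.2)
              simpa [i.2] using this
          ext z'
          simp only [hq, Set.mem_pi, Set.mem_Iio]
          constructor
          · intro hz' i hi
            rw [← key ⟨i, hi⟩]; exact hz' i hi
          · intro hz' i hi
            rw [key ⟨i, hi⟩]; exact hz' i hi
      · push_neg at hex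
        refine ⟨Set.univ, Filter.univ_mem, ?_⟩
        rintro P ⟨hPmem, -⟩ P' -
        simp only [Set.mem_iUnion] at hPmem
        obtain ⟨c, hc, hPc⟩ := hPmem
        rw [hex c hc] at hPc
        exact absurd hPc (Set.notMem_empty P)
end

section
/- Let κ be an uncountable cardinal and suppose each space X_α (α < κ) contains at least two points. Then the product space X = ∏_{α<κ} X_α does not have a strong π-base at any point; in particular, X is not strongly π-metrizable. -/
open Set Topology

lemma aux_supp {ι : Type*} {X : ι → Type*} [∀ α, TopologicalSpace (X α)]
    {P : Set (∀ α, X α)} (hP : IsOpen P) (hne : P.Nonempty) :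
    {α | (fun f : ∀ β, X β => f α) '' P ≠ Set.univ}.Finite := by
  classical
  obtain ⟨p, hp⟩ := hne
  obtain ⟨I, u, h1, h2⟩ := isOpen_pi_iff.mp hP p hp
  refine I.finite_toSet.subset ?_
  intro α hα
  by_contra hαI
  apply hα
  ext z
  simp only [Set.mem_image, Set.mem_univ, iff_true]
  refine ⟨Function.update p α z, h2 (Set.mem_pi.mpr ?_), Function.update_self _ _ _⟩
  intro a ha
  rw [Function.update_of_ne (by rintro rfl; exact hαI ha)]
  exact (h1 a ha).2

theorem stmt19 (ι : Type*) [Uncountable ι] (X : ι → Type*)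
    [∀ α, TopologicalSpace (X α)] [∀ α, T1Space (X α)]
    [∀ α, Nontrivial (X α)] :
    (∀ x : (∀ α, X α), ¬ ∃ pb : Set (Set (∀ α, X α)), StrongPiBaseAt pb x) ∧
    ¬ StronglyPiMetrizable (∀ α, X α) := by
  have key : ∀ x : (∀ α, X α), ¬ ∃ pb : Set (Set (∀ α, X α)), StrongPiBaseAt pb x := by
    rintro x ⟨pb, hon, hbase, hfin⟩
    choose y hy using fun α => exists_ne (x α)
    set U : ι → Set (∀ α, X α) := fun α => (fun f => f α) ⁻¹' {y α}ᶜ with hUdef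
    have hUopen : ∀ α, IsOpen (U α) := fun α =>
      isOpen_compl_singleton.preimage (continuous_apply α)
    have hxU : ∀ α, x ∈ U α := fun α h => hy α (Eq.symm h)
    set supp : Set (∀ α, X α) → Set ι :=
      fun P => {α | (fun f : ∀ β, X β => f α) '' P ≠ Set.univ} with hsuppdef
    have hsupp : ∀ P ∈ pb, (supp P).Finite := fun P hP =>
      aux_supp (hon P hP).1 (hon P hP).2
    have hsub : ∀ P ∈ pb, ∀ α, α ∉ supp P → ¬ P ⊆ U α := by
      intro P hP α hα hPU
      have : (fun f : ∀ β, X β => f α) '' P = Set.univ := not_not.mp hα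
      have hyim : y α ∈ (fun f : ∀ β, X β => f α) '' P := this ▸ Set.mem_univ _
      obtain ⟨g, hg, hgα⟩ := hyim
      exact (hPU hg) (by simp [hgα])
    by_cases hc : pb.Countable
    · have hA : (⋃ P ∈ pb, supp P).Countable :=
        Set.Countable.biUnion hc (fun P hP => (hsupp P hP).countable)
      obtain ⟨α, hα⟩ : ∃ α, α ∉ ⋃ P ∈ pb, supp P := by
        by_contra h
        push_neg at h
        have : (Set.univ : Set ι).Countable :=
          (Set.eq_univ_of_forall h) ▸ hA
        exact not_countable
          (Set.countable_univ_iff.mp this)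
      obtain ⟨P, hP, hPU⟩ := hbase (U α) (hUopen α) (hxU α)
      exact hsub P hP α (fun h => hα (Set.mem_biUnion hP h)) hPU
    · have hinf : pb.Infinite := fun h => hc h.countable
      let f := hinf.natEmbedding
      have hA : (⋃ n, supp (f n)).Countable :=
        Set.countable_iUnion (fun n => (hsupp (f n) (f n).2).countable)
      obtain ⟨α, hα⟩ : ∃ α, α ∉ ⋃ n, supp (f n) := by
        by_contra h
        push_neg at h
        have : (Set.univ : Set ι).Countable := (Set.eq_univ_of_forall h) ▸ hA
        exact not_countable
          (Set.countable_univ_iff.mp this)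
      have hmem : ∀ n, (f n : Set (∀ α, X α)) ∈ {P ∈ pb | ¬ P ⊆ U α} := by
        intro n
        exact ⟨(f n).2, hsub (f n) (f n).2 α (fun h => hα (Set.mem_iUnion.mpr ⟨n, h⟩))⟩
      have hinj : Function.Injective (fun n => (f n : Set (∀ α, X α))) := by
        intro a b hab
        exact f.injective (Subtype.ext hab)
      exact (hfin (U α) (hUopen α) (hxU α)).not_infinite
        (Set.infinite_of_injective_forall_mem hinj hmem)
  refine ⟨key, ?_⟩
  rintro ⟨pb, hpb, -⟩
  have : ∀ α, Nonempty (X α) := fun α => inferInstance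
  exact key (fun α => Classical.arbitrary _) ⟨_, hpb _⟩
end
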